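/- arXiv:2208.10163 — 3 statements merged into one kernel-verified Lean document; each statement's English description precedes it below -/
import Mathlib

section
/- If T ⊥ (Y(t), S(t)) | X, G=1 (internal validity), G ⊥ (Y(0),Y(1),S(0),S(1)) | X (conditional external validity), and T ⊥ Y(t) | X, S(t), G=0 (latent unconfoundedness) for t ∈ {0,1}, then the mean exchangeability condition E[Y(t) | X, S(t), T=t, G=1] = E[Y(t) | X, S(t), T=t, G=0] holds for t ∈ {0,1}. -/
/-!
The common version is `h (X, S(t)) = E_P[Y(t) | X, S(t)]`. If `W ⊥ U | m` and `V` is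
`σ(U)`-measurable, then for `m ≤ m' ≤ m ⊔ σ(U)` conditioning on an event `{W ∈ A}` does not change
`E[V | m']`: the weight `E[1_{W ∈ A} | m ⊔ σ(U)] = E[1_{W ∈ A} | m]` is `m'`-measurable and can be
pulled through `E[· | m']`. With `W = G`, `m = σ(X)`, `m' = σ(X, S(t))` and `U` all potential
outcomes (external validity), `E_P[Y(t) | X, S(t)]` stays a version of the conditional mean in each
population `G = g`. With `W = T` it passes on to the arm `T = t`: in `G = 1` by internal validity
(`U = (Y(t), S(t))`), in `G = 0` by latent unconfoundedness (`m = m' = σ(X, S(t))`, `U = Y(t)`).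
-/

open MeasureTheory ProbabilityTheory

/-- `h : β → ℝ` is (a version of) the conditional mean of `Y` given `Z` under the measure `P`,
i.e. `h (Z ω) = E_P[Y | Z] (ω)`, characterized by the defining integral property. -/
def IsCondMean {Ω β : Type*} [MeasurableSpace Ω] [MeasurableSpace β]
    (P : Measure Ω) (Z : Ω → β) (Y : Ω → ℝ) (h : β → ℝ) : Prop :=
  ∀ B : Set β, MeasurableSet B →
    ∫ ω in Z ⁻¹' B, Y ω ∂P = ∫ ω in Z ⁻¹' B, h (Z ω) ∂P

open MeasurableSpace Set

theorem Set.mul_indicator_one {ι M₀ : Type*} [MulZeroOneClass M₀] (s : Set ι) (f : ι → M₀) :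
    (f * s.indicator fun _ => 1) = s.indicator f := by
  funext i
  by_cases hi : i ∈ s <;> simp [hi]

section PiSystem

variable {Ω : Type*}

theorem isPiSystem_image2_inter (m₁ m₂ : MeasurableSpace Ω) :
    IsPiSystem (image2 (· ∩ ·) {s | MeasurableSet[m₁] s} {t | MeasurableSet[m₂] t}) := by
  rintro _ ⟨s₁, hs₁, t₁, ht₁, rfl⟩ _ ⟨s₂, hs₂, t₂, ht₂, rfl⟩ -
  exact ⟨s₁ ∩ s₂, hs₁.inter hs₂, t₁ ∩ t₂, ht₁.inter ht₂, inter_inter_inter_comm ..⟩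

theorem sup_eq_generateFrom_image2_inter (m₁ m₂ : MeasurableSpace Ω) :
    m₁ ⊔ m₂ =
      generateFrom (image2 (· ∩ ·) {s | MeasurableSet[m₁] s} {t | MeasurableSet[m₂] t}) := by
  refine le_antisymm (sup_le (fun s hs => ?_) (fun t ht => ?_)) (generateFrom_le ?_)
  · exact measurableSet_generateFrom ⟨s, hs, univ, .univ, inter_univ s⟩
  · exact measurableSet_generateFrom ⟨univ, .univ, t, ht, univ_inter t⟩
  · rintro _ ⟨s, hs, t, ht, rfl⟩
    exact (le_sup_left (b := m₂) s hs).inter (le_sup_right (a := m₁) t ht)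

theorem setIntegral_eq_of_isPiSystem {E : Type*} [NormedAddCommGroup E] [NormedSpace ℝ E]
    {m m₀ : MeasurableSpace Ω} {μ : Measure[m₀] Ω} (hm : m ≤ m₀)
    {p : Set (Set Ω)} (h_eq : m = generateFrom p) (h_inter : IsPiSystem p)
    {f g : Ω → E} (hf : Integrable f μ) (hg : Integrable g μ)
    (h_univ : ∫ ω, f ω ∂μ = ∫ ω, g ω ∂μ)
    (basic : ∀ s ∈ p, ∫ ω in s, f ω ∂μ = ∫ ω in s, g ω ∂μ) :
    ∀ s, MeasurableSet[m] s → ∫ ω in s, f ω ∂μ = ∫ ω in s, g ω ∂μ := by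
  refine induction_on_inter h_eq h_inter (by simp) basic (fun s hs hfg => ?_)
    (fun s hdisj hs hfg => ?_)
  · rw [setIntegral_compl (hm s hs) hf, setIntegral_compl (hm s hs) hg, h_univ, hfg]
  · rw [integral_iUnion (fun i => hm _ (hs i)) hdisj hf.integrableOn,
      integral_iUnion (fun i => hm _ (hs i)) hdisj hg.integrableOn]
    exact tsum_congr hfg

end PiSystem

theorem MeasureTheory.Integrable.cond {Ω E : Type*} [NormedAddCommGroup E]
    {mΩ : MeasurableSpace Ω} {μ : Measure Ω} {f : Ω → E} (hf : Integrable f μ) (s : Set Ω) :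
    Integrable f μ[|s] := by
  rcases eq_or_ne (μ s) 0 with hs | hs
  · simp [cond_eq_zero_of_meas_eq_zero hs]
  · exact hf.restrict.smul_measure (ENNReal.inv_ne_top.2 hs)

theorem ProbabilityTheory.setIntegral_cond {Ω : Type*} {mΩ : MeasurableSpace Ω}
    {μ : Measure Ω} {s t : Set Ω} (ht : MeasurableSet t) (f : Ω → ℝ) :
    ∫ ω in t, f ω ∂μ[|s] = (μ s)⁻¹.toReal * ∫ ω in t ∩ s, f ω ∂μ := by
  rw [ProbabilityTheory.cond, Measure.restrict_smul, Measure.restrict_restrict ht,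
    integral_smul_measure, smul_eq_mul]

section CondIndep

variable {Ω β γ : Type*} {m mΩ : MeasurableSpace Ω} [StandardBorelSpace Ω] {hm : m ≤ mΩ}
  {μ : Measure Ω} [IsFiniteMeasure μ] {mβ : MeasurableSpace β} {mγ : MeasurableSpace γ}
  {W : Ω → β} {U : Ω → γ} {A : Set β}

theorem ProbabilityTheory.CondIndepFun.condExp_indicator_sup_ae_eq
    (hWU : CondIndepFun m hm W U μ) (hW : Measurable W) (hU : Measurable U)
    (hA : MeasurableSet A) :
    μ⟦W ⁻¹' A | m ⊔ mγ.comap U⟧ =ᵐ[μ] μ⟦W ⁻¹' A | m⟧ := by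
  set φ := μ⟦W ⁻¹' A | m⟧
  have hφ : StronglyMeasurable[m] φ := stronglyMeasurable_condExp
  have hφi : Integrable φ μ := integrable_condExp
  have hind : Integrable ((W ⁻¹' A).indicator fun _ => (1 : ℝ)) μ :=
    (integrable_const 1).indicator (hW hA)
  have hn : m ⊔ mγ.comap U ≤ mΩ := sup_le hm hU.comap_le
  refine (ae_eq_condExp_of_forall_setIntegral_eq hn hind
    (fun _ _ _ => hφi.integrableOn) (fun E hE _ => ?_)
    ((hφ.mono (le_sup_left (b := mγ.comap U))).aestronglyMeasurable)).symm
  refine setIntegral_eq_of_isPiSystem hn (sup_eq_generateFrom_image2_inter _ _)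
    (isPiSystem_image2_inter _ _) hφi hind (integral_condExp hm) ?_ E hE
  rintro _ ⟨s, hs, _, ⟨t, ht, rfl⟩, rfl⟩
  have hUt : MeasurableSet (U ⁻¹' t) := hU ht
  have hprod := (condIndepFun_iff_condExp_inter_preimage_eq_mul hW hU).1 hWU A t hA ht
  have hφUt : Integrable (φ * (U ⁻¹' t).indicator fun _ => (1 : ℝ)) μ := by
    simpa only [mul_indicator_one] using hφi.indicator hUt
  have hpull := condExp_mul_of_stronglyMeasurable_left hφ hφUt
    ((integrable_const 1).indicator hUt)
  calc ∫ ω in s ∩ U ⁻¹' t, φ ω ∂μ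
      = ∫ ω in s, μ[φ * (U ⁻¹' t).indicator (fun _ => (1 : ℝ)) | m] ω ∂μ := by
        rw [setIntegral_condExp hm hφUt hs, ← setIntegral_indicator hUt, mul_indicator_one]
    _ = ∫ ω in s, (μ⟦W ⁻¹' A ∩ U ⁻¹' t | m⟧) ω ∂μ := by
        refine setIntegral_congr_ae (hm s hs) ?_
        filter_upwards [hpull, hprod] with ω h₁ h₂ _
        rw [h₁, h₂]
        rfl
    _ = ∫ ω in s ∩ U ⁻¹' t, (W ⁻¹' A).indicator (fun _ => (1 : ℝ)) ω ∂μ := by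
        rw [setIntegral_condExp hm ((integrable_const 1).indicator ((hW hA).inter hUt)) hs,
          ← setIntegral_indicator hUt, indicator_indicator, inter_comm]

theorem ProbabilityTheory.CondIndepFun.condExp_indicator_ae_eq_mul
    (hWU : CondIndepFun m hm W U μ) (hW : Measurable W) (hU : Measurable U)
    (hA : MeasurableSet A) {f : Ω → ℝ} (hf : StronglyMeasurable[m ⊔ mγ.comap U] f)
    (hfi : Integrable f μ) :
    μ[(W ⁻¹' A).indicator f | m ⊔ mγ.comap U] =ᵐ[μ] f * μ⟦W ⁻¹' A | m⟧ := by
  rw [← mul_indicator_one]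
  filter_upwards [condExp_mul_of_stronglyMeasurable_left hf
    (by simpa only [mul_indicator_one] using hfi.indicator (hW hA))
    ((integrable_const 1).indicator (hW hA)),
    hWU.condExp_indicator_sup_ae_eq hW hU hA] with ω h₁ h₂
  rw [h₁, Pi.mul_apply, h₂]
  rfl

theorem ProbabilityTheory.CondIndepFun.setIntegral_condExp_inter_preimage
    (hWU : CondIndepFun m hm W U μ) (hW : Measurable W) (hU : Measurable U)
    (hA : MeasurableSet A) {m' : MeasurableSpace Ω} (hmm' : m ≤ m') (hm'U : m' ≤ m ⊔ mγ.comap U)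
    {V : Ω → ℝ} (hV : StronglyMeasurable[mγ.comap U] V) (hVi : Integrable V μ)
    {C : Set Ω} (hC : MeasurableSet[m'] C) :
    ∫ ω in C ∩ W ⁻¹' A, μ[V | m'] ω ∂μ = ∫ ω in C ∩ W ⁻¹' A, V ω ∂μ := by
  set φ := μ⟦W ⁻¹' A | m⟧
  have hn : m ⊔ mγ.comap U ≤ mΩ := sup_le hm hU.comap_le
  have hm' : m' ≤ mΩ := hm'U.trans hn
  -- integrating over `W ∈ A` amounts to weighting by `φ`, since `W ⊥ U | m`
  have reweight : ∀ f : Ω → ℝ, StronglyMeasurable[m ⊔ mγ.comap U] f → Integrable f μ →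
      ∫ ω in C ∩ W ⁻¹' A, f ω ∂μ = ∫ ω in C, f ω * φ ω ∂μ := fun f hf hfi => by
    rw [← setIntegral_indicator (hW hA),
      ← setIntegral_condExp hn (hfi.indicator (hW hA)) (hm'U C hC)]
    exact setIntegral_congr_ae (hm' C hC)
      ((hWU.condExp_indicator_ae_eq_mul hW hU hA hf hfi).mono fun ω h _ => h)
  have hVφ : Integrable (V * φ) μ :=
    integrable_condExp.congr (hWU.condExp_indicator_ae_eq_mul hW hU hA (hV.mono le_sup_right) hVi)
  have hφ : StronglyMeasurable[m'] φ := stronglyMeasurable_condExp.mono hmm'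
  calc ∫ ω in C ∩ W ⁻¹' A, μ[V | m'] ω ∂μ
      = ∫ ω in C, μ[V | m'] ω * φ ω ∂μ :=
        reweight _ (stronglyMeasurable_condExp.mono hm'U) integrable_condExp
    _ = ∫ ω in C, μ[V * φ | m'] ω ∂μ :=
        setIntegral_congr_ae (hm' C hC)
          ((condExp_mul_of_stronglyMeasurable_right hφ hVφ hVi).mono fun ω h _ => h.symm)
    _ = ∫ ω in C ∩ W ⁻¹' A, V ω ∂μ := by
        rw [setIntegral_condExp hm' hVφ hC, reweight V (hV.mono le_sup_right) hVi]
        rfl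

theorem ProbabilityTheory.CondIndepFun.condExp_ae_eq_condExp_cond_preimage
    (hWU : CondIndepFun m hm W U μ) (hW : Measurable W) (hU : Measurable U)
    (hA : MeasurableSet A) {m' : MeasurableSpace Ω} (hmm' : m ≤ m') (hm'U : m' ≤ m ⊔ mγ.comap U)
    {V : Ω → ℝ} (hV : StronglyMeasurable[mγ.comap U] V) (hVi : Integrable V μ) :
    μ[V | m'] =ᵐ[μ[|W ⁻¹' A]] μ[|W ⁻¹' A][V | m'] := by
  have hm' : m' ≤ mΩ := hm'U.trans (sup_le hm hU.comap_le)
  refine ae_eq_condExp_of_forall_setIntegral_eq hm' (hVi.cond _)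
    (fun _ _ _ => (integrable_condExp.cond _).integrableOn) (fun C hC _ => ?_)
    stronglyMeasurable_condExp.aestronglyMeasurable
  rw [setIntegral_cond (hm' C hC), setIntegral_cond (hm' C hC),
    hWU.setIntegral_condExp_inter_preimage hW hU hA hmm' hm'U hV hVi hC]

end CondIndep

theorem isCondMean_of_comp_ae_eq_condExp {Ω β : Type*} {mΩ : MeasurableSpace Ω}
    {mβ : MeasurableSpace β} {ν : Measure Ω} [IsFiniteMeasure ν] {Z : Ω → β} {Y : Ω → ℝ}
    {h : β → ℝ} (hZ : Measurable Z) (hY : Integrable Y ν) (hh : h ∘ Z =ᵐ[ν] ν[Y | mβ.comap Z]) :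
    IsCondMean ν Z Y h := fun B hB => by
  rw [← setIntegral_condExp hZ.comap_le hY ⟨B, hB, rfl⟩]
  exact setIntegral_congr_ae (hZ hB) (hh.mono fun ω hω _ => hω.symm)

theorem MeasurableSpace.comap_prodMk_le_sup {Ω α β : Type*} {mα : MeasurableSpace α}
    {mβ : MeasurableSpace β} {m : MeasurableSpace Ω} {X : Ω → α} {S : Ω → β}
    (hS : Measurable[m] S) :
    MeasurableSpace.comap (fun ω => (X ω, S ω)) inferInstance ≤ mα.comap X ⊔ m :=
  (((comap_measurable X).mono le_sup_left le_rfl).prodMk (hS.mono le_sup_right le_rfl)).comap_le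

theorem exists_common_isCondMean_of_condIndepFun {Ω α β γ : Type*} {mΩ : MeasurableSpace Ω}
    [StandardBorelSpace Ω] {mα : MeasurableSpace α} {mβ : MeasurableSpace β}
    {mγ : MeasurableSpace γ} (P : Measure Ω) [IsFiniteMeasure P]
    (X : Ω → α) (S : Ω → β) (T G Y : Ω → ℝ) (U : Ω → γ)
    (hX : Measurable X) (hS : Measurable S) (hT : Measurable T) (hG : Measurable G)
    (hU : Measurable U) (tv : ℝ) (hYi : Integrable Y P)
    (hYU : Measurable[mγ.comap U] Y) (hSU : Measurable[mγ.comap U] S)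
    (hiv : CondIndepFun (mα.comap X) hX.comap_le T (fun ω => (Y ω, S ω)) (P[|G ⁻¹' {1}]))
    (hext : CondIndepFun (mα.comap X) hX.comap_le G U P)
    (hlat : CondIndepFun (MeasurableSpace.comap (fun ω => (X ω, S ω)) inferInstance)
      (hX.prodMk hS).comap_le T Y (P[|G ⁻¹' {0}])) :
    ∃ h : α × β → ℝ, Measurable h ∧
      IsCondMean (P[|{ω | T ω = tv} ∩ G ⁻¹' {0}]) (fun ω => (X ω, S ω)) Y h ∧
      IsCondMean (P[|{ω | T ω = tv} ∩ G ⁻¹' {1}]) (fun ω => (X ω, S ω)) Y h := by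
  set Z := fun ω => (X ω, S ω)
  have hZ : Measurable Z := hX.prodMk hS
  have hY : Measurable Y := hYU.mono hU.comap_le le_rfl
  have hXZ : mα.comap X ≤ MeasurableSpace.comap Z inferInstance :=
    (measurable_fst.comp (comap_measurable Z)).comap_le
  obtain ⟨h, hh, hk⟩ :=
    (stronglyMeasurable_condExp (m := MeasurableSpace.comap Z inferInstance) (μ := P)
      (f := Y)).measurable.exists_eq_measurable_comp
  have ext : ∀ g : ℝ, P[Y | MeasurableSpace.comap Z inferInstance]
      =ᵐ[P[|G ⁻¹' {g}]] P[|G ⁻¹' {g}][Y | MeasurableSpace.comap Z inferInstance] := fun g =>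
    hext.condExp_ae_eq_condExp_cond_preimage hG hU (measurableSet_singleton g) hXZ
      (comap_prodMk_le_sup hSU) hYU.stronglyMeasurable hYi
  have hTv : {ω | T ω = tv} = T ⁻¹' {tv} := rfl
  refine ⟨h, hh, ?_, ?_⟩ <;>
    rw [hTv, inter_comm, ← cond_cond_eq_cond_inter (hG (measurableSet_singleton _))
      (hT (measurableSet_singleton tv))] <;>
    refine isCondMean_of_comp_ae_eq_condExp hZ ((hYi.cond _).cond _) (hk ▸ ?_)
  · refine ((ext 0).filter_mono cond_absolutelyContinuous.ae_le).trans ?_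
    exact hlat.condExp_ae_eq_condExp_cond_preimage hT hY (measurableSet_singleton tv) le_rfl
      le_sup_left (comap_measurable Y).stronglyMeasurable (hYi.cond _)
  · refine ((ext 1).filter_mono cond_absolutelyContinuous.ae_le).trans ?_
    exact hiv.condExp_ae_eq_condExp_cond_preimage hT (hY.prodMk hS) (measurableSet_singleton tv)
      hXZ (comap_prodMk_le_sup (measurable_snd.comp (comap_measurable _)))
      (measurable_fst.comp (comap_measurable _)).stronglyMeasurable (hYi.cond _)

theorem mean_exchangeability_of_external_validity_and_latent_unconfoundedness_general
    {Ω : Type*} [MeasurableSpace Ω] [StandardBorelSpace Ω]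
    {α β : Type*} [mα : MeasurableSpace α] [mβ : MeasurableSpace β]
    (P : Measure Ω) [IsProbabilityMeasure P]
    (X : Ω → α) (S0 S1 : Ω → β) (T G Y0 Y1 : Ω → ℝ)
    (hX : Measurable X) (hS0 : Measurable S0) (hS1 : Measurable S1)
    (hT : Measurable T) (hG : Measurable G) (hY0 : Measurable Y0) (hY1 : Measurable Y1)
    (hY0int : Integrable Y0 P) (hY1int : Integrable Y1 P)
    -- internal validity: `T ⊥ (Y(t), S(t)) | X` within `G = 1`
    (hiv0 : CondIndepFun (MeasurableSpace.comap X mα) hX.comap_le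
      T (fun ω => (Y0 ω, S0 ω)) (P[|G ⁻¹' {1}]))
    (hiv1 : CondIndepFun (MeasurableSpace.comap X mα) hX.comap_le
      T (fun ω => (Y1 ω, S1 ω)) (P[|G ⁻¹' {1}]))
    -- conditional external validity: `G ⊥ (Y(0), Y(1), S(0), S(1)) | X`
    (hext : CondIndepFun (MeasurableSpace.comap X mα) hX.comap_le
      G (fun ω => ((Y0 ω, Y1 ω), (S0 ω, S1 ω))) P)
    -- latent unconfoundedness: `T ⊥ Y(t) | X, S(t)` within `G = 0`
    (hlat0 : CondIndepFun (MeasurableSpace.comap (fun ω => (X ω, S0 ω)) inferInstance)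
      (hX.prodMk hS0).comap_le T Y0 (P[|G ⁻¹' {0}]))
    (hlat1 : CondIndepFun (MeasurableSpace.comap (fun ω => (X ω, S1 ω)) inferInstance)
      (hX.prodMk hS1).comap_le T Y1 (P[|G ⁻¹' {0}])) :
    ∀ t : Bool, ∃ h : α × β → ℝ, Measurable h ∧
      IsCondMean (P[|{ω | T ω = (if t then 1 else 0)} ∩ G ⁻¹' {0}])
        (fun ω => (X ω, if t then S1 ω else S0 ω)) (if t then Y1 else Y0) h ∧
      IsCondMean (P[|{ω | T ω = (if t then 1 else 0)} ∩ G ⁻¹' {1}])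
        (fun ω => (X ω, if t then S1 ω else S0 ω)) (if t then Y1 else Y0) h := by
  have hU := comap_measurable (m := inferInstance) (fun ω => ((Y0 ω, Y1 ω), (S0 ω, S1 ω)))
  rintro (_ | _)
  · exact exists_common_isCondMean_of_condIndepFun P X S0 T G Y0 _ hX hS0 hT hG
      ((hY0.prodMk hY1).prodMk (hS0.prodMk hS1)) 0 hY0int
      ((measurable_fst.comp measurable_fst).comp hU) ((measurable_fst.comp measurable_snd).comp hU)
      hiv0 hext hlat0
  · exact exists_common_isCondMean_of_condIndepFun P X S1 T G Y1 _ hX hS1 hT hG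
      ((hY0.prodMk hY1).prodMk (hS0.prodMk hS1)) 1 hY1int
      ((measurable_snd.comp measurable_fst).comp hU) ((measurable_snd.comp measurable_snd).comp hU)
      hiv1 hext hlat1

/-- **Proposition 2.** If `T ⊥ (Y(t), S(t)) | X, G=1` (internal validity),
`G ⊥ (Y(0),Y(1),S(0),S(1)) | X` (conditional external validity), and
`T ⊥ Y(t) | X, S(t), G=0` (latent unconfoundedness) for `t ∈ {0,1}`, then mean exchangeability
holds: `E[Y(t) | X, S(t), T=t, G=1] = E[Y(t) | X, S(t), T=t, G=0]`, expressed as the existence of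
a common version of the two conditional means. -/
theorem mean_exchangeability_of_external_validity_and_latent_unconfoundedness
    {Ω : Type*} [MeasurableSpace Ω] [StandardBorelSpace Ω] [Nonempty Ω]
    {α β : Type*} [mα : MeasurableSpace α] [mβ : MeasurableSpace β]
    (P : Measure Ω) [IsProbabilityMeasure P]
    (X : Ω → α) (S0 S1 : Ω → β) (T G Y0 Y1 : Ω → ℝ)
    (hX : Measurable X) (hS0 : Measurable S0) (hS1 : Measurable S1)
    (hT : Measurable T) (hG : Measurable G) (hY0 : Measurable Y0) (hY1 : Measurable Y1)
    (hTbin : ∀ ω, T ω = 0 ∨ T ω = 1) (hGbin : ∀ ω, G ω = 0 ∨ G ω = 1)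
    -- all conditioning events have positive probability
    (hpos : ∀ tv gv : ℝ, tv ∈ ({0, 1} : Set ℝ) → gv ∈ ({0, 1} : Set ℝ) →
      P ({ω | T ω = tv} ∩ G ⁻¹' {gv}) ≠ 0)
    (hY0int : Integrable Y0 P) (hY1int : Integrable Y1 P)
    -- internal validity: `T ⊥ (Y(t), S(t)) | X` within `G = 1`
    (hiv0 : CondIndepFun (MeasurableSpace.comap X mα) hX.comap_le
      T (fun ω => (Y0 ω, S0 ω)) (P[|G ⁻¹' {1}]))
    (hiv1 : CondIndepFun (MeasurableSpace.comap X mα) hX.comap_le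
      T (fun ω => (Y1 ω, S1 ω)) (P[|G ⁻¹' {1}]))
    -- conditional external validity: `G ⊥ (Y(0), Y(1), S(0), S(1)) | X`
    (hext : CondIndepFun (MeasurableSpace.comap X mα) hX.comap_le
      G (fun ω => ((Y0 ω, Y1 ω), (S0 ω, S1 ω))) P)
    -- latent unconfoundedness: `T ⊥ Y(t) | X, S(t)` within `G = 0`
    (hlat0 : CondIndepFun (MeasurableSpace.comap (fun ω => (X ω, S0 ω)) inferInstance)
      (hX.prodMk hS0).comap_le T Y0 (P[|G ⁻¹' {0}]))
    (hlat1 : CondIndepFun (MeasurableSpace.comap (fun ω => (X ω, S1 ω)) inferInstance)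
      (hX.prodMk hS1).comap_le T Y1 (P[|G ⁻¹' {0}])) :
    ∀ t : Bool, ∃ h : α × β → ℝ, Measurable h ∧
      IsCondMean (P[|{ω | T ω = (if t then 1 else 0)} ∩ G ⁻¹' {0}])
        (fun ω => (X ω, if t then S1 ω else S0 ω)) (if t then Y1 else Y0) h ∧
      IsCondMean (P[|{ω | T ω = (if t then 1 else 0)} ∩ G ⁻¹' {1}])
        (fun ω => (X ω, if t then S1 ω else S0 ω)) (if t then Y1 else Y0) h :=
  mean_exchangeability_of_external_validity_and_latent_unconfoundedness_general (mα := mα)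
    (mβ := mβ) P X S0 S1 T G Y0 Y1 hX hS0 hS1 hT hG hY0 hY1 hY0int hY1int hiv0 hiv1 hext hlat0 hlat1
end

section
/- Any mean-zero square-integrable function h(T,X,S,Y,G) of the observed data, where T, G are binary and Y is only observed when G=0, decomposes as h = GT·S₁(S|X) + G(1-T)·S₀(S|X) + G(T-e(X))a(X) + (G-π(X))b(X) + (1-G)T[S_Y¹ + S_S¹] + (1-G)(1-T)[S_Y⁰ + S_S⁰] + (1-G)(T-p(X))c(X) + S_X(X), where each component has the appropriate zero conditional mean: E[S_t(S|X)|X,T=t,G=1]=0, E[S_Y^t|X,S,T=t,G=0]=0, E[S_S^t|X,T=t,G=0]=0, E[S_X(X)]=0. -/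
open MeasureTheory ProbabilityTheory

/-!
Centre `h` stratum by stratum: on each `(G, T)`-stratum subtract its conditional mean given `X`,
and in the `G = 0` strata, where `Y` is observed, first its conditional mean given `(X, S)`.
Writing `m_tg(X)` for the stratum means, the decomposition then holds pointwise with
`a = m₁₁ - m₀₁`, `c = m₁₀ - m₀₀`, `b = M₁ - M₀` and `S_X = π M₁ + (1 - π) M₀`, where
`M₁ = e m₁₁ + (1 - e) m₀₁` and `M₀ = p m₁₀ + (1 - p) m₀₀`.

The only real content is `E[S_X(X)] = 0`. By the law of total expectation over a binary `W`,
applied to `T` inside each arm `G = g` and then to `G`, `M_g` is a version of `E[h | X, G = g]`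
and `S_X` one of `E[h | X]`, so `E[S_X(X)] = E[h] = 0`. The law of total expectation itself
comes from identifying the law of `X` on `{W = 1}` with the law of `X` weighted by the density
`P(W = 1 | X)`.
-/

section CondMean

variable {Ω γ : Type*} [MeasurableSpace Ω] [MeasurableSpace γ] {μ : Measure Ω} {Z : Ω → γ}
  {f f' : Ω → ℝ} {m : γ → ℝ} {u : Set Ω}

theorem ProbabilityTheory.measure_smul_cond [IsFiniteMeasure μ] (u : Set Ω) :
    μ u • μ[|u] = μ.restrict u := by
  by_cases hu : μ u = 0
  · rw [hu, zero_smul, Measure.restrict_eq_zero.mpr hu]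
  · rw [cond, smul_smul, ENNReal.mul_inv_cancel hu (measure_ne_top _ _), one_smul]

theorem MeasureTheory.Integrable.cond_s13 [IsFiniteMeasure μ] (hf : Integrable f μ) :
    Integrable f μ[|u] := by
  by_cases hu : μ u = 0
  · rw [cond_eq_zero_of_meas_eq_zero hu]
    exact integrable_zero_measure
  · exact hf.restrict.smul_measure (ENNReal.inv_ne_top.mpr hu)

theorem MeasureTheory.Integrable.restrict_of_cond [IsFiniteMeasure μ] (hf : Integrable f μ[|u]) :
    Integrable f (μ.restrict u) :=
  measure_smul_cond (μ := μ) u ▸ hf.smul_measure (measure_ne_top μ u)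

theorem exists_isCondMean [IsFiniteMeasure μ] (hZ : Measurable Z) (hf : Integrable f μ) :
    ∃ m : γ → ℝ, Measurable m ∧ Integrable (fun ω => m (Z ω)) μ ∧ IsCondMean μ Z f m := by
  obtain ⟨m, hm, hmZ⟩ := (stronglyMeasurable_condExp (m := MeasurableSpace.comap Z ‹_›)
    (μ := μ) (f := f)).exists_eq_measurable_comp
  refine ⟨m, hm.measurable, ?_, fun B hB => ?_⟩
  · change Integrable (m ∘ Z) μ
    exact hmZ ▸ integrable_condExp
  · rw [← setIntegral_condExp hZ.comap_le hf ⟨B, hB, rfl⟩, hmZ]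
    rfl

namespace IsCondMean

theorem congr_ae (h : IsCondMean μ Z f m) (hff' : f =ᵐ[μ] f') : IsCondMean μ Z f' m :=
  fun B hB => by rw [← h B hB, integral_congr_ae (ae_restrict_of_ae hff')]

theorem setIntegral_sub_eq_zero (h : IsCondMean μ Z f m) (hf : Integrable f μ)
    (hm : Integrable (fun ω => m (Z ω)) μ) {B : Set γ} (hB : MeasurableSet B) :
    ∫ ω in Z ⁻¹' B, (f ω - m (Z ω)) ∂μ = 0 := by
  rw [integral_sub hf.integrableOn hm.integrableOn, h B hB, sub_self]

theorem restrict_of_cond [IsFiniteMeasure μ] (h : IsCondMean μ[|u] Z f m) :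
    IsCondMean (μ.restrict u) Z f m := fun B hB => by
  rw [← measure_smul_cond u, Measure.restrict_smul, integral_smul_measure,
    integral_smul_measure, h B hB]

theorem one_sub [IsFiniteMeasure μ] (h : IsCondMean μ Z f m) (hf : Integrable f μ)
    (hm : Integrable (fun ω => m (Z ω)) μ) :
    IsCondMean μ Z (fun ω => 1 - f ω) (fun x => 1 - m x) := fun B hB => by
  rw [integral_sub (integrable_const 1).integrableOn hf.integrableOn,
    integral_sub (integrable_const 1).integrableOn hm.integrableOn, h B hB]

theorem of_prod {β : Type*} [MeasurableSpace β] {S : Ω → β} {φ : γ × β → ℝ}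
    (hφ : IsCondMean μ (fun ω => (Z ω, S ω)) f φ) (hm : IsCondMean μ Z f m) :
    IsCondMean μ Z (fun ω => φ (Z ω, S ω)) m := fun B hB => by
  have := hφ (B ×ˢ Set.univ) (hB.prod .univ)
  rw [Set.mk_preimage_prod, Set.preimage_univ, Set.inter_univ] at this
  rw [← this, hm B hB]

end IsCondMean

end CondMean

section WithDensity

variable {Ω α : Type*} [MeasurableSpace Ω] [MeasurableSpace α] {μ : Measure Ω} {X : Ω → α}
  {u : Set Ω} {g : α → ℝ}

theorem map_restrict_eq_withDensity_of_isCondMean [IsFiniteMeasure μ] (hX : Measurable X)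
    (hu : MeasurableSet u) (hg : Measurable g) (hg0 : ∀ x, 0 ≤ g x)
    (hgi : Integrable (fun ω => g (X ω)) μ) (h : IsCondMean μ X (u.indicator 1) g) :
    (μ.restrict u).map X = (μ.map X).withDensity (fun x => ENNReal.ofReal (g x)) := by
  ext B hB
  have hg_map : Integrable g (μ.map X) :=
    (integrable_map_measure hg.aestronglyMeasurable hX.aemeasurable).mpr hgi
  rw [Measure.map_apply hX hB, Measure.restrict_apply (hX hB), withDensity_apply _ hB,
    ← ofReal_integral_eq_lintegral_ofReal hg_map.integrableOn (ae_of_all _ hg0),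
    setIntegral_map hB hg.aestronglyMeasurable hX.aemeasurable, ← h B hB,
    integral_indicator_one hu, measureReal_restrict_apply hu, Set.inter_comm, ofReal_measureReal]

variable (hX : Measurable X) (hg : Measurable g) (hg0 : ∀ x, 0 ≤ g x)
  (hmap : (μ.restrict u).map X = (μ.map X).withDensity (fun x => ENNReal.ofReal (g x)))
include hX hg hg0 hmap

theorem setIntegral_comp_mul_of_map_restrict {k : α → ℝ} (hk : Measurable k) {B : Set α}
    (hB : MeasurableSet B) :
    ∫ ω in X ⁻¹' B, g (X ω) * k (X ω) ∂μ = ∫ ω in X ⁻¹' B, k (X ω) ∂μ.restrict u := by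
  calc ∫ ω in X ⁻¹' B, g (X ω) * k (X ω) ∂μ
      = ∫ x in B, g x * k x ∂μ.map X :=
        (setIntegral_map hB (hg.mul hk).aestronglyMeasurable hX.aemeasurable).symm
    _ = ∫ x in B, k x ∂(μ.restrict u).map X := by
        rw [hmap]; erw [setIntegral_withDensity_eq_setIntegral_smul hg.real_toNNReal _ hB]
        simp only [NNReal.smul_def, Real.coe_toNNReal _ (hg0 _), smul_eq_mul]
    _ = ∫ ω in X ⁻¹' B, k (X ω) ∂μ.restrict u :=
        setIntegral_map hB hk.aestronglyMeasurable hX.aemeasurable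

theorem integrable_comp_mul_iff_of_map_restrict {k : α → ℝ} (hk : Measurable k) :
    Integrable (fun ω => g (X ω) * k (X ω)) μ ↔ Integrable (fun ω => k (X ω)) (μ.restrict u) := by
  calc Integrable (fun ω => g (X ω) * k (X ω)) μ
      ↔ Integrable (fun x => g x * k x) (μ.map X) :=
        (integrable_map_measure (hg.mul hk).aestronglyMeasurable hX.aemeasurable).symm
    _ ↔ Integrable k ((μ.restrict u).map X) := by
        rw [hmap]; erw [integrable_withDensity_iff_integrable_smul hg.real_toNNReal]
        simp only [NNReal.smul_def, Real.coe_toNNReal _ (hg0 _), smul_eq_mul]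
    _ ↔ Integrable (fun ω => k (X ω)) (μ.restrict u) :=
        integrable_map_measure hk.aestronglyMeasurable hX.aemeasurable

end WithDensity

section Mixture

variable {Ω α : Type*} [MeasurableSpace Ω] [MeasurableSpace α] {μ : Measure Ω} {X : Ω → α}
  {W f : Ω → ℝ} {g m₁ m₀ : α → ℝ}

theorem IsCondMean.mixture [IsFiniteMeasure μ] (hX : Measurable X) (hW : Measurable W)
    (hWbin : ∀ ω, W ω = 0 ∨ W ω = 1) (hg : Measurable g) (hg0 : ∀ x, 0 ≤ g x)
    (hg1 : ∀ x, g x ≤ 1) (hWg : IsCondMean μ X W g) (hf : Integrable f μ)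
    (hm₁ : Measurable m₁) (hm₁i : Integrable (fun ω => m₁ (X ω)) μ[|{ω | W ω = 1}])
    (h₁ : IsCondMean μ[|{ω | W ω = 1}] X f m₁)
    (hm₀ : Measurable m₀) (hm₀i : Integrable (fun ω => m₀ (X ω)) μ[|{ω | W ω = 0}])
    (h₀ : IsCondMean μ[|{ω | W ω = 0}] X f m₀) :
    Integrable (fun ω => g (X ω) * m₁ (X ω) + (1 - g (X ω)) * m₀ (X ω)) μ ∧
      IsCondMean μ X f (fun x => g x * m₁ x + (1 - g x) * m₀ x) := by
  have hu₁ : MeasurableSet {ω | W ω = 1} := hW (measurableSet_singleton 1)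
  have hu₀ : {ω | W ω = 0} = {ω | W ω = 1}ᶜ := by
    ext ω; rcases hWbin ω with h | h <;> simp [h]
  have hW₁ : {ω | W ω = 1}.indicator 1 = W := by
    funext ω; rcases hWbin ω with h | h <;> simp [h]
  have hW₀ : {ω | W ω = 0}.indicator 1 = fun ω => 1 - W ω := by
    funext ω; rcases hWbin ω with h | h <;> simp [h]
  have hWi : Integrable W μ := hW₁ ▸ (integrable_const 1).indicator hu₁
  have hgi : Integrable (fun ω => g (X ω)) μ :=
    (integrable_const 1).mono' (hg.comp hX).aestronglyMeasurable
      (ae_of_all _ fun ω => by simpa [abs_of_nonneg (hg0 _)] using hg1 (X ω))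
  have map₁ := map_restrict_eq_withDensity_of_isCondMean hX hu₁ hg hg0 hgi (by rwa [hW₁])
  have map₀ := map_restrict_eq_withDensity_of_isCondMean hX (hu₀ ▸ hu₁.compl)
    (hg.const_sub 1) (fun x => sub_nonneg.mpr (hg1 x)) ((integrable_const 1).sub hgi)
    (by rw [hW₀]; exact hWg.one_sub hWi hgi)
  have hi₁ := (integrable_comp_mul_iff_of_map_restrict hX hg hg0 map₁ hm₁).mpr
    hm₁i.restrict_of_cond
  have hi₀ := (integrable_comp_mul_iff_of_map_restrict hX (hg.const_sub 1)
    (fun x => sub_nonneg.mpr (hg1 x)) map₀ hm₀).mpr hm₀i.restrict_of_cond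
  refine ⟨hi₁.add hi₀, fun B hB => ?_⟩
  calc ∫ ω in X ⁻¹' B, f ω ∂μ
      = ∫ ω in X ⁻¹' B, f ω ∂μ.restrict {ω | W ω = 1}
        + ∫ ω in X ⁻¹' B, f ω ∂μ.restrict {ω | W ω = 0} := by
        rw [← integral_add_measure hf.restrict.restrict hf.restrict.restrict,
          ← Measure.restrict_add, hu₀, Measure.restrict_add_restrict_compl hu₁]
    _ = ∫ ω in X ⁻¹' B, (g (X ω) * m₁ (X ω) + (1 - g (X ω)) * m₀ (X ω)) ∂μ := by
        rw [integral_add hi₁.integrableOn hi₀.integrableOn,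
          setIntegral_comp_mul_of_map_restrict hX hg hg0 map₁ hm₁ hB,
          setIntegral_comp_mul_of_map_restrict hX (hg.const_sub 1)
            (fun x => sub_nonneg.mpr (hg1 x)) map₀ hm₀ hB,
          h₁.restrict_of_cond B hB, h₀.restrict_of_cond B hB]

end Mixture

theorem tangent_space_decomposition_general
    {Ω : Type*} [MeasurableSpace Ω]
    {α β : Type*} [mα : MeasurableSpace α] [mβ : MeasurableSpace β]
    (P : Measure Ω) [IsProbabilityMeasure P]
    (X : Ω → α) (S : Ω → β) (T G Y : Ω → ℝ)
    (hX : Measurable X) (hS : Measurable S) (hT : Measurable T) (hG : Measurable G)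
    (hTbin : ∀ ω, T ω = 0 ∨ T ω = 1) (hGbin : ∀ ω, G ω = 0 ∨ G ω = 1)
    -- `e(x) = P(T=1|X=x,G=1)`, `p(x) = P(T=1|X=x,G=0)`, `π(x) = P(G=1|X=x)`, all in `(0,1)`
    (e p π : α → ℝ) (he : Measurable e) (hp : Measurable p) (hπ : Measurable π)
    (he_ver : IsCondMean (P[|G ⁻¹' {1}]) X T e)
    (hp_ver : IsCondMean (P[|G ⁻¹' {0}]) X T p)
    (hπ_ver : IsCondMean P X G π)
    (he_bdd : ∀ x, 0 < e x ∧ e x < 1) (hp_bdd : ∀ x, 0 < p x ∧ p x < 1)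
    (hπ_bdd : ∀ x, 0 < π x ∧ π x < 1)
    -- `h` is a square-integrable mean-zero function of the observed data
    -- `(T, X, S, Y·𝟙{G=0}, G)`
    (H : ℝ × α × β × ℝ × ℝ → ℝ) (hH : Measurable H)
    (h : Ω → ℝ)
    (hdef : ∀ ω, h ω = H (T ω, X ω, S ω, (1 - G ω) * Y ω, G ω))
    (hL2 : MemLp h 2 P) (hmean : ∫ ω, h ω ∂P = 0) :
    ∃ (s1 s0 ss1 ss0 : α × β → ℝ) (a b c SX : α → ℝ) (sy1 sy0 : α × β × ℝ → ℝ),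
      Measurable s1 ∧ Measurable s0 ∧ Measurable ss1 ∧ Measurable ss0 ∧
      Measurable a ∧ Measurable b ∧ Measurable c ∧ Measurable SX ∧
      Measurable sy1 ∧ Measurable sy0 ∧
      -- `E[S₁(S|X) | X, T=1, G=1] = 0`, `E[S₀(S|X) | X, T=0, G=1] = 0`
      (∀ B : Set α, MeasurableSet B →
        ∫ ω in X ⁻¹' B, s1 (X ω, S ω) ∂(P[|{ω | T ω = 1} ∩ G ⁻¹' {1}]) = 0) ∧
      (∀ B : Set α, MeasurableSet B →
        ∫ ω in X ⁻¹' B, s0 (X ω, S ω) ∂(P[|{ω | T ω = 0} ∩ G ⁻¹' {1}]) = 0) ∧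
      -- `E[S_Y^t | X, S, T=t, G=0] = 0`
      (∀ B : Set (α × β), MeasurableSet B →
        ∫ ω in (fun ω => (X ω, S ω)) ⁻¹' B, sy1 (X ω, S ω, Y ω)
          ∂(P[|{ω | T ω = 1} ∩ G ⁻¹' {0}]) = 0) ∧
      (∀ B : Set (α × β), MeasurableSet B →
        ∫ ω in (fun ω => (X ω, S ω)) ⁻¹' B, sy0 (X ω, S ω, Y ω)
          ∂(P[|{ω | T ω = 0} ∩ G ⁻¹' {0}]) = 0) ∧
      -- `E[S_S^t | X, T=t, G=0] = 0`
      (∀ B : Set α, MeasurableSet B →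
        ∫ ω in X ⁻¹' B, ss1 (X ω, S ω) ∂(P[|{ω | T ω = 1} ∩ G ⁻¹' {0}]) = 0) ∧
      (∀ B : Set α, MeasurableSet B →
        ∫ ω in X ⁻¹' B, ss0 (X ω, S ω) ∂(P[|{ω | T ω = 0} ∩ G ⁻¹' {0}]) = 0) ∧
      -- `E[S_X(X)] = 0`
      (∫ ω, SX (X ω) ∂P = 0) ∧
      -- the decomposition itself
      (∀ᵐ ω ∂P, h ω
        = G ω * T ω * s1 (X ω, S ω)
          + G ω * (1 - T ω) * s0 (X ω, S ω)
          + G ω * (T ω - e (X ω)) * a (X ω)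
          + (G ω - π (X ω)) * b (X ω)
          + (1 - G ω) * T ω * (sy1 (X ω, S ω, Y ω) + ss1 (X ω, S ω))
          + (1 - G ω) * (1 - T ω) * (sy0 (X ω, S ω, Y ω) + ss0 (X ω, S ω))
          + (1 - G ω) * (T ω - p (X ω)) * c (X ω)
          + SX (X ω)) := by
  have hint : Integrable h P := hL2.integrable one_le_two
  have hcc : ∀ t g : ℝ, P[|G ⁻¹' {g}][|{ω | T ω = t}] = P[|{ω | T ω = t} ∩ G ⁻¹' {g}] :=
    fun t g => by
      rw [cond_cond_eq_cond_inter (t := {ω | T ω = t}) (hG (measurableSet_singleton g))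
        (hT (measurableSet_singleton t)), Set.inter_comm]
  have htreated : ∀ t : ℝ,
      h =ᵐ[P[|{ω | T ω = t} ∩ G ⁻¹' {1}]] fun ω => H (t, X ω, S ω, 0, 1) := fun t =>
    ae_cond_of_forall_mem ((hT (measurableSet_singleton t)).inter (hG (measurableSet_singleton 1)))
      fun ω ⟨(ht : T ω = t), (hg : G ω = 1)⟩ => by simp [hdef, ht, hg]
  have hcontrol : ∀ t : ℝ,
      h =ᵐ[P[|{ω | T ω = t} ∩ G ⁻¹' {0}]] fun ω => H (t, X ω, S ω, Y ω, 0) := fun t =>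
    ae_cond_of_forall_mem ((hT (measurableSet_singleton t)).inter (hG (measurableSet_singleton 0)))
      fun ω ⟨(ht : T ω = t), (hg : G ω = 0)⟩ => by simp [hdef, ht, hg]
  obtain ⟨m11, hm11, hm11i, hm11c⟩ :=
    exists_isCondMean (μ := P[|{ω | T ω = 1} ∩ G ⁻¹' {1}]) hX hint.cond_s13
  obtain ⟨m01, hm01, hm01i, hm01c⟩ :=
    exists_isCondMean (μ := P[|{ω | T ω = 0} ∩ G ⁻¹' {1}]) hX hint.cond_s13
  obtain ⟨m10, hm10, hm10i, hm10c⟩ :=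
    exists_isCondMean (μ := P[|{ω | T ω = 1} ∩ G ⁻¹' {0}]) hX hint.cond_s13
  obtain ⟨m00, hm00, hm00i, hm00c⟩ :=
    exists_isCondMean (μ := P[|{ω | T ω = 0} ∩ G ⁻¹' {0}]) hX hint.cond_s13
  obtain ⟨φ1, hφ1, hφ1i, hφ1c⟩ :=
    exists_isCondMean (μ := P[|{ω | T ω = 1} ∩ G ⁻¹' {0}]) (hX.prodMk hS) hint.cond_s13
  obtain ⟨φ0, hφ0, hφ0i, hφ0c⟩ :=
    exists_isCondMean (μ := P[|{ω | T ω = 0} ∩ G ⁻¹' {0}]) (hX.prodMk hS) hint.cond_s13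
  obtain ⟨hM1i, hM1c⟩ := he_ver.mixture hX hT hTbin he (fun x => (he_bdd x).1.le)
    (fun x => (he_bdd x).2.le) hint.cond_s13 hm11 (hcc 1 1 ▸ hm11i) (hcc 1 1 ▸ hm11c)
    hm01 (hcc 0 1 ▸ hm01i) (hcc 0 1 ▸ hm01c)
  obtain ⟨hM0i, hM0c⟩ := hp_ver.mixture hX hT hTbin hp (fun x => (hp_bdd x).1.le)
    (fun x => (hp_bdd x).2.le) hint.cond_s13 hm10 (hcc 1 0 ▸ hm10i) (hcc 1 0 ▸ hm10c)
    hm00 (hcc 0 0 ▸ hm00i) (hcc 0 0 ▸ hm00c)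
  obtain ⟨-, hSX⟩ := hπ_ver.mixture hX hG hGbin hπ (fun x => (hπ_bdd x).1.le)
    (fun x => (hπ_bdd x).2.le) hint (by fun_prop) hM1i hM1c (by fun_prop) hM0i hM0c
  refine ⟨fun q => H (1, q.1, q.2, 0, 1) - m11 q.1, fun q => H (0, q.1, q.2, 0, 1) - m01 q.1,
    fun q => φ1 q - m10 q.1, fun q => φ0 q - m00 q.1, fun x => m11 x - m01 x,
    fun x => (e x * m11 x + (1 - e x) * m01 x) - (p x * m10 x + (1 - p x) * m00 x),
    fun x => m10 x - m00 x,
    fun x => π x * (e x * m11 x + (1 - e x) * m01 x)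
      + (1 - π x) * (p x * m10 x + (1 - p x) * m00 x),
    fun q => H (1, q.1, q.2.1, q.2.2, 0) - φ1 (q.1, q.2.1),
    fun q => H (0, q.1, q.2.1, q.2.2, 0) - φ0 (q.1, q.2.1),
    by fun_prop, by fun_prop, by fun_prop, by fun_prop, by fun_prop, by fun_prop, by fun_prop,
    by fun_prop, by fun_prop, by fun_prop,
    fun B hB => (hm11c.congr_ae (htreated 1)).setIntegral_sub_eq_zero
      (hint.cond_s13.congr (htreated 1)) hm11i hB,
    fun B hB => (hm01c.congr_ae (htreated 0)).setIntegral_sub_eq_zero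
      (hint.cond_s13.congr (htreated 0)) hm01i hB,
    fun B hB => (hφ1c.congr_ae (hcontrol 1)).setIntegral_sub_eq_zero
      (hint.cond_s13.congr (hcontrol 1)) hφ1i hB,
    fun B hB => (hφ0c.congr_ae (hcontrol 0)).setIntegral_sub_eq_zero
      (hint.cond_s13.congr (hcontrol 0)) hφ0i hB,
    fun B hB => (hφ1c.of_prod hm10c).setIntegral_sub_eq_zero hφ1i hm10i hB,
    fun B hB => (hφ0c.of_prod hm00c).setIntegral_sub_eq_zero hφ0i hm00i hB, ?_,
    ae_of_all _ fun ω => ?_⟩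
  · simpa [hmean] using (hSX Set.univ MeasurableSet.univ).symm
  · rcases hTbin ω with ht | ht <;> rcases hGbin ω with hg | hg <;>
      simp only [hdef ω, ht, hg, sub_zero, sub_self, zero_mul, mul_zero, one_mul,
        mul_one, zero_add, add_zero] <;>
      ring

/-- **Tangent-space decomposition.** Any mean-zero square-integrable function
`h(T, X, S, Y·𝟙{G=0}, G)` of the observed data decomposes as
`h = GT S₁(S|X) + G(1-T) S₀(S|X) + G(T-e(X))a(X) + (G-π(X))b(X)`
`  + (1-G)T[S_Y¹ + S_S¹] + (1-G)(1-T)[S_Y⁰ + S_S⁰] + (1-G)(T-p(X))c(X) + S_X(X)`,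
where each component has the appropriate zero conditional mean. -/
theorem tangent_space_decomposition
    {Ω : Type*} [MeasurableSpace Ω]
    {α β : Type*} [mα : MeasurableSpace α] [mβ : MeasurableSpace β]
    (P : Measure Ω) [IsProbabilityMeasure P]
    (X : Ω → α) (S : Ω → β) (T G Y : Ω → ℝ)
    (hX : Measurable X) (hS : Measurable S) (hT : Measurable T) (hG : Measurable G)
    (hY : Measurable Y)
    (hTbin : ∀ ω, T ω = 0 ∨ T ω = 1) (hGbin : ∀ ω, G ω = 0 ∨ G ω = 1)
    (hpos : ∀ tv gv : ℝ, tv ∈ ({0, 1} : Set ℝ) → gv ∈ ({0, 1} : Set ℝ) →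
      P ({ω | T ω = tv} ∩ G ⁻¹' {gv}) ≠ 0)
    -- `e(x) = P(T=1|X=x,G=1)`, `p(x) = P(T=1|X=x,G=0)`, `π(x) = P(G=1|X=x)`, all in `(0,1)`
    (e p π : α → ℝ) (he : Measurable e) (hp : Measurable p) (hπ : Measurable π)
    (he_ver : IsCondMean (P[|G ⁻¹' {1}]) X T e)
    (hp_ver : IsCondMean (P[|G ⁻¹' {0}]) X T p)
    (hπ_ver : IsCondMean P X G π)
    (he_bdd : ∀ x, 0 < e x ∧ e x < 1) (hp_bdd : ∀ x, 0 < p x ∧ p x < 1)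
    (hπ_bdd : ∀ x, 0 < π x ∧ π x < 1)
    -- `h` is a square-integrable mean-zero function of the observed data
    -- `(T, X, S, Y·𝟙{G=0}, G)`
    (H : ℝ × α × β × ℝ × ℝ → ℝ) (hH : Measurable H)
    (h : Ω → ℝ)
    (hdef : ∀ ω, h ω = H (T ω, X ω, S ω, (1 - G ω) * Y ω, G ω))
    (hL2 : MemLp h 2 P) (hmean : ∫ ω, h ω ∂P = 0) :
    ∃ (s1 s0 ss1 ss0 : α × β → ℝ) (a b c SX : α → ℝ) (sy1 sy0 : α × β × ℝ → ℝ),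
      Measurable s1 ∧ Measurable s0 ∧ Measurable ss1 ∧ Measurable ss0 ∧
      Measurable a ∧ Measurable b ∧ Measurable c ∧ Measurable SX ∧
      Measurable sy1 ∧ Measurable sy0 ∧
      -- `E[S₁(S|X) | X, T=1, G=1] = 0`, `E[S₀(S|X) | X, T=0, G=1] = 0`
      (∀ B : Set α, MeasurableSet B →
        ∫ ω in X ⁻¹' B, s1 (X ω, S ω) ∂(P[|{ω | T ω = 1} ∩ G ⁻¹' {1}]) = 0) ∧
      (∀ B : Set α, MeasurableSet B →
        ∫ ω in X ⁻¹' B, s0 (X ω, S ω) ∂(P[|{ω | T ω = 0} ∩ G ⁻¹' {1}]) = 0) ∧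
      -- `E[S_Y^t | X, S, T=t, G=0] = 0`
      (∀ B : Set (α × β), MeasurableSet B →
        ∫ ω in (fun ω => (X ω, S ω)) ⁻¹' B, sy1 (X ω, S ω, Y ω)
          ∂(P[|{ω | T ω = 1} ∩ G ⁻¹' {0}]) = 0) ∧
      (∀ B : Set (α × β), MeasurableSet B →
        ∫ ω in (fun ω => (X ω, S ω)) ⁻¹' B, sy0 (X ω, S ω, Y ω)
          ∂(P[|{ω | T ω = 0} ∩ G ⁻¹' {0}]) = 0) ∧
      -- `E[S_S^t | X, T=t, G=0] = 0`
      (∀ B : Set α, MeasurableSet B →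
        ∫ ω in X ⁻¹' B, ss1 (X ω, S ω) ∂(P[|{ω | T ω = 1} ∩ G ⁻¹' {0}]) = 0) ∧
      (∀ B : Set α, MeasurableSet B →
        ∫ ω in X ⁻¹' B, ss0 (X ω, S ω) ∂(P[|{ω | T ω = 0} ∩ G ⁻¹' {0}]) = 0) ∧
      -- `E[S_X(X)] = 0`
      (∫ ω, SX (X ω) ∂P = 0) ∧
      -- the decomposition itself
      (∀ᵐ ω ∂P, h ω
        = G ω * T ω * s1 (X ω, S ω)
          + G ω * (1 - T ω) * s0 (X ω, S ω)
          + G ω * (T ω - e (X ω)) * a (X ω)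
          + (G ω - π (X ω)) * b (X ω)
          + (1 - G ω) * T ω * (sy1 (X ω, S ω, Y ω) + ss1 (X ω, S ω))
          + (1 - G ω) * (1 - T ω) * (sy0 (X ω, S ω, Y ω) + ss0 (X ω, S ω))
          + (1 - G ω) * (T ω - p (X ω)) * c (X ω)
          + SX (X ω)) :=
  tangent_space_decomposition_general (mα := mα) (mβ := mβ) P X S T G Y hX hS hT hG hTbin hGbin e p
    π he hp hπ he_ver hp_ver hπ_ver he_bdd hp_bdd hπ_bdd H hH h hdef hL2 hmean
end

section
/- Under internal validity and mean exchangeability, the term A = E[ G(μ₁(X) - τ₁) · S(T,X,S,Y,G) ] in the pathwise derivative calculation reduces to E[(μ₁(X) - τ₁)(π̇(X) + π(X)S_f(X))], where S is the score of the parametric submodel; i.e., the cross terms with T·S₁(S|X), the propensity-score score, and the (G-π(X)) score vanish except for the π and f(x) components. -/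
/-!
On `G = 1` the factor `G` kills every `(1 - G)`-term of the score and turns the `π`-score
`(G - π)π̇ / (π(1 - π))` into `π̇ / π`. Of what is left, `T·S₁`, `(1 - T)·S₀` and the
propensity-score term are each a function of `X` times a variable with conditional mean zero
given `X` on the relevant subpopulation (`T = 1, G = 1`; `T = 0, G = 1`; `G = 1`), so they
integrate to zero. The remaining term is `G φ(X)` with `φ = (μ₁ - τ₁)(π̇/π + S_f)`, and
`E[G φ(X)] = E[π(X) φ(X)]`.

Orthogonality of a conditionally centred variable to every integrable `g(X) W`, not only to the
indicators `1{X ∈ B}`, follows by approximating `g` with simple functions and dominated convergence.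
-/

open MeasureTheory ProbabilityTheory

open Filter Topology Function

theorem integrable_of_forall_mem_Icc {Ω : Type*} [MeasurableSpace Ω] {μ : Measure Ω}
    [IsFiniteMeasure μ] {f : Ω → ℝ} (hf : Measurable f) (h : ∀ ω, f ω ∈ Set.Icc 0 1) :
    Integrable f μ :=
  .of_bound hf.aestronglyMeasurable 1 (ae_of_all _ fun ω => by
    rw [Real.norm_eq_abs, abs_le]; constructor <;> linarith [(h ω).1, (h ω).2])

theorem integrable_and_integral_eq_of_forall_eq_add_add_add {Ω : Type*} [MeasurableSpace Ω]
    {μ : Measure Ω} {F a b c d : Ω → ℝ} (hF : ∀ ω, F ω = a ω + b ω + c ω + d ω)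
    (hFi : Integrable F μ) (ha : Integrable a μ) (hb : Integrable b μ) (hc : Integrable c μ)
    (ha0 : ∫ ω, a ω ∂μ = 0) (hb0 : ∫ ω, b ω ∂μ = 0) (hc0 : ∫ ω, c ω ∂μ = 0) :
    Integrable d μ ∧ ∫ ω, F ω ∂μ = ∫ ω, d ω ∂μ := by
  have habc : Integrable (fun ω => a ω + b ω + c ω) μ := (ha.add hb).add hc
  have hd : Integrable d μ := (hFi.sub habc).congr (ae_of_all _ fun ω => by simp [hF])
  refine ⟨hd, ?_⟩
  rw [integral_congr_ae (ae_of_all _ hF), integral_add habc hd,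
    integral_add (by exact ha.add hb) hc, integral_add ha hb, ha0, hb0, hc0]
  ring

namespace IsCondMean

variable {Ω α : Type*} [MeasurableSpace Ω] [MeasurableSpace α] {Q : Measure Ω} {X : Ω → α}
  {W : Ω → ℝ}

theorem zero_iff :
    IsCondMean Q X W 0 ↔ ∀ B : Set α, MeasurableSet B → ∫ ω in X ⁻¹' B, W ω ∂Q = 0 := by
  simp [IsCondMean]

theorem integral_simpleFunc_comp_mul_eq_zero (h : IsCondMean Q X W 0) (hX : Measurable X)
    (s : SimpleFunc α ℝ) (hsW : Integrable (fun ω => s (X ω) * W ω) Q) :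
    ∫ ω, s (X ω) * W ω ∂Q = 0 := by
  have hfiber : ∀ c ∈ s.range, MeasurableSet (X ⁻¹' (s ⁻¹' {c})) :=
    fun c _ => hX (s.measurableSet_fiber c)
  have hcover : (⋃ c ∈ s.range, X ⁻¹' (s ⁻¹' {c})) = Set.univ := by
    ext ω; simp
  have hdisj : Set.Pairwise (s.range : Set ℝ) (Disjoint on fun c => X ⁻¹' (s ⁻¹' {c})) :=
    fun c _ d _ hcd => ((Set.disjoint_singleton.2 hcd).preimage s).preimage X
  rw [← setIntegral_univ, ← hcover,
    integral_biUnion_finset _ hfiber hdisj fun c _ => hsW.integrableOn]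
  refine Finset.sum_eq_zero fun c hc => ?_
  rw [setIntegral_congr_fun (hfiber c hc) (g := fun ω => c * W ω) fun ω hω => by
      rw [show s (X ω) = c from hω], integral_const_mul,
    zero_iff.1 h _ (s.measurableSet_fiber c), mul_zero]

theorem integral_comp_mul_eq_zero (h : IsCondMean Q X W 0) (hX : Measurable X)
    (hW : AEStronglyMeasurable W Q) {g : α → ℝ} (hg : Measurable g)
    (hgW : Integrable (fun ω => g (X ω) * W ω) Q) :
    ∫ ω, g (X ω) * W ω ∂Q = 0 := by
  let gₙ : ℕ → SimpleFunc α ℝ := SimpleFunc.approxOn g hg Set.univ 0 (Set.mem_univ 0)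
  have hbound : ∀ n ω, ‖gₙ n (X ω) * W ω‖ ≤ ‖g (X ω) * W ω‖ + ‖g (X ω) * W ω‖ := by
    intro n ω
    rw [norm_mul, norm_mul, ← add_mul]
    exact mul_le_mul_of_nonneg_right
      (SimpleFunc.norm_approxOn_zero_le hg (Set.mem_univ 0) (X ω) n) (norm_nonneg _)
  have hmeas : ∀ n, AEStronglyMeasurable (fun ω => gₙ n (X ω) * W ω) Q :=
    fun n => ((gₙ n).measurable.comp hX).aestronglyMeasurable.mul hW
  have hlim : Tendsto (fun n => ∫ ω, gₙ n (X ω) * W ω ∂Q) atTop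
      (𝓝 (∫ ω, g (X ω) * W ω ∂Q)) :=
    tendsto_integral_of_dominated_convergence _ hmeas (hgW.norm.add hgW.norm)
      (fun n => ae_of_all _ (hbound n))
      (ae_of_all _ fun ω =>
        (SimpleFunc.tendsto_approxOn hg (Set.mem_univ 0) (by simp)).mul_const (W ω))
  have hzero : ∀ n, ∫ ω, gₙ n (X ω) * W ω ∂Q = 0 := fun n =>
    h.integral_simpleFunc_comp_mul_eq_zero hX (gₙ n)
      ((hgW.norm.add hgW.norm).mono' (hmeas n) (ae_of_all _ (hbound n)))
  simp only [hzero] at hlim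
  exact tendsto_nhds_unique hlim tendsto_const_nhds

theorem sub_comp {Y : Ω → ℝ} {f : α → ℝ} (h : IsCondMean Q X Y f) (hY : Integrable Y Q)
    (hf : Integrable (fun ω => f (X ω)) Q) : IsCondMean Q X (fun ω => Y ω - f (X ω)) 0 := by
  intro B hB
  rw [integral_sub hY.integrableOn hf.integrableOn, h B hB, sub_self]
  simp

theorem sub_comp_of_mem_Icc [IsFiniteMeasure Q] {Y : Ω → ℝ} {f : α → ℝ} (h : IsCondMean Q X Y f)
    (hX : Measurable X) (hY : Measurable Y) (hf : Measurable f) (hY01 : ∀ ω, Y ω ∈ Set.Icc 0 1)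
    (hf01 : ∀ x, f x ∈ Set.Icc 0 1) : IsCondMean Q X (fun ω => Y ω - f (X ω)) 0 :=
  h.sub_comp (integrable_of_forall_mem_Icc hY hY01)
    (integrable_of_forall_mem_Icc (hf.comp hX) fun ω => hf01 (X ω))

theorem integral_comp_mul_eq_of_mem_Icc [IsFiniteMeasure Q] {Y : Ω → ℝ} {f g : α → ℝ}
    (h : IsCondMean Q X Y f) (hX : Measurable X) (hY : Measurable Y) (hf : Measurable f)
    (hY01 : ∀ ω, Y ω ∈ Set.Icc 0 1) (hf01 : ∀ x, f x ∈ Set.Icc 0 1) (hg : Measurable g)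
    (hgY : Integrable (fun ω => g (X ω) * Y ω) Q)
    (hgf : Integrable (fun ω => g (X ω) * f (X ω)) Q) :
    ∫ ω, g (X ω) * Y ω ∂Q = ∫ ω, g (X ω) * f (X ω) ∂Q := by
  rw [← sub_eq_zero, ← integral_sub hgY hgf]
  simp only [← mul_sub]
  exact (h.sub_comp_of_mem_Icc hX hY hf hY01 hf01).integral_comp_mul_eq_zero hX
    (hY.sub (hf.comp hX)).aestronglyMeasurable hg
    (by simpa only [mul_sub, Pi.sub_def] using hgY.sub hgf)

theorem indicator_of_cond {P : Measure Ω} [IsFiniteMeasure P] {A : Set Ω} (hA : MeasurableSet A)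
    (h : IsCondMean (P[|A]) X W 0) (hX : Measurable X) : IsCondMean P X (A.indicator W) 0 := by
  intro B hB
  rw [setIntegral_indicator hA]
  simp only [Pi.zero_apply, integral_zero]
  by_cases hPA : P A = 0
  · rw [Measure.restrict_eq_zero.2 (measure_mono_null Set.inter_subset_right hPA),
      integral_zero_measure]
  have hcond := zero_iff.1 h B hB
  rw [ProbabilityTheory.cond, Measure.restrict_smul, Measure.restrict_restrict (hX hB),
    integral_smul_measure, smul_eq_mul, mul_eq_zero] at hcond
  exact hcond.resolve_left (ENNReal.toReal_ne_zero.2 ⟨ENNReal.inv_ne_zero.2 (measure_ne_top P A),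
    ENNReal.inv_ne_top.2 hPA⟩)

theorem integral_comp_mul_indicator_eq_zero {P : Measure Ω} [IsFiniteMeasure P] {A : Set Ω}
    (hA : MeasurableSet A) (h : IsCondMean (P[|A]) X W 0) (hX : Measurable X)
    (hW : AEStronglyMeasurable W P) {g : α → ℝ} (hg : Measurable g)
    (hgW : Integrable (fun ω => g (X ω) * A.indicator W ω) P) :
    ∫ ω, g (X ω) * A.indicator W ω ∂P = 0 :=
  (h.indicator_of_cond hA hX).integral_comp_mul_eq_zero hX (hW.indicator hA) hg hgW

end IsCondMean

theorem A_term_reduction_general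
    {Ω : Type*} [MeasurableSpace Ω]
    {α β : Type*} [mα : MeasurableSpace α] [mβ : MeasurableSpace β]
    (P : Measure Ω) [IsProbabilityMeasure P]
    (X : Ω → α) (S : Ω → β) (T G Y : Ω → ℝ)
    (hX : Measurable X) (hS : Measurable S) (hT : Measurable T) (hG : Measurable G)
    (hTbin : ∀ ω, T ω = 0 ∨ T ω = 1) (hGbin : ∀ ω, G ω = 0 ∨ G ω = 1)
    -- `e(x) = P(T=1|X=x,G=1)` and `π(x) = P(G=1|X=x)`, strictly in `(0,1)`
    (e π p : α → ℝ) (he : Measurable e) (hπ : Measurable π)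
    (he_ver : IsCondMean (P[|G ⁻¹' {1}]) X T e)
    (hπ_ver : IsCondMean P X G π)
    (he_bdd : ∀ x, 0 < e x ∧ e x < 1) (hπ_bdd : ∀ x, 0 < π x ∧ π x < 1)
    -- components of the submodel score
    (S1s S0s SS1 SS0 : α × β → ℝ) (SY1 SY0 : α × β × ℝ → ℝ)
    (edot pidot pdot Sf : α → ℝ)
    (hS1s : Measurable S1s) (hS0s : Measurable S0s)
    (hedot : Measurable edot) (hpidot : Measurable pidot)
    (hSf : Measurable Sf)
    -- score-space conditions: `∫ S₁(s|x) f₁(s|x) ds = 0` (i.e. `E[S₁(S|X)|X,T=1,G=1]=0`),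
    -- likewise for `S₀`, and `∫ S_f(x) f(x) dx = 0`
    (hS1s0 : ∀ B : Set α, MeasurableSet B →
      ∫ ω in X ⁻¹' B, S1s (X ω, S ω) ∂(P[|{ω | T ω = 1} ∩ G ⁻¹' {1}]) = 0)
    (hS0s0 : ∀ B : Set α, MeasurableSet B →
      ∫ ω in X ⁻¹' B, S0s (X ω, S ω) ∂(P[|{ω | T ω = 0} ∩ G ⁻¹' {1}]) = 0)
    -- `μ₁(x) = E[Y(1)|X=x,G=1]` and `τ₁ = E[Y(1)|G=1]`
    (m : α → ℝ) (hm : Measurable m)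
    (τ₁ : ℝ)
    -- integrability of each product term
    (hint : ∀ f : Ω → ℝ,
      (f = fun ω => G ω * (m (X ω) - τ₁) *
          (G ω * T ω * S1s (X ω, S ω)
            + G ω * (1 - T ω) * S0s (X ω, S ω)
            + G ω * (T ω - e (X ω)) * edot (X ω) / (e (X ω) * (1 - e (X ω)))
            + (G ω - π (X ω)) * pidot (X ω) / (π (X ω) * (1 - π (X ω)))
            + (1 - G ω) * T ω * (SY1 (X ω, S ω, Y ω) + SS1 (X ω, S ω))
            + (1 - G ω) * (1 - T ω) * (SY0 (X ω, S ω, Y ω) + SS0 (X ω, S ω))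
            + (1 - G ω) * (T ω - p (X ω)) * pdot (X ω) / (p (X ω) * (1 - p (X ω)))
            + Sf (X ω))) ∨
      (f = fun ω => G ω * (m (X ω) - τ₁) * T ω * S1s (X ω, S ω)) ∨
      (f = fun ω => G ω * (m (X ω) - τ₁) * (1 - T ω) * S0s (X ω, S ω)) ∨
      (f = fun ω => G ω * (m (X ω) - τ₁) * (T ω - e (X ω)) * edot (X ω)
          / (e (X ω) * (1 - e (X ω)))) ∨
      (f = fun ω => G ω * (m (X ω) - τ₁) * (G ω - π (X ω)) * pidot (X ω)
          / (π (X ω) * (1 - π (X ω)))) ∨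
      (f = fun ω => (m (X ω) - τ₁) * (pidot (X ω) + π (X ω) * Sf (X ω))) →
      Integrable f P) :
    ∫ ω, G ω * (m (X ω) - τ₁) *
        (G ω * T ω * S1s (X ω, S ω)
          + G ω * (1 - T ω) * S0s (X ω, S ω)
          + G ω * (T ω - e (X ω)) * edot (X ω) / (e (X ω) * (1 - e (X ω)))
          + (G ω - π (X ω)) * pidot (X ω) / (π (X ω) * (1 - π (X ω)))
          + (1 - G ω) * T ω * (SY1 (X ω, S ω, Y ω) + SS1 (X ω, S ω))
          + (1 - G ω) * (1 - T ω) * (SY0 (X ω, S ω, Y ω) + SS0 (X ω, S ω))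
          + (1 - G ω) * (T ω - p (X ω)) * pdot (X ω) / (p (X ω) * (1 - p (X ω)))
          + Sf (X ω)) ∂P
      = ∫ ω, (m (X ω) - τ₁) * (pidot (X ω) + π (X ω) * Sf (X ω)) ∂P := by
  set A₁ := {ω | T ω = 1} ∩ G ⁻¹' {1}
  set A₀ := {ω | T ω = 0} ∩ G ⁻¹' {1}
  set φ₄ : α → ℝ := fun x => (m x - τ₁) * edot x / (e x * (1 - e x)) with hφ₄
  set φ₅ : α → ℝ := fun x => (m x - τ₁) * (pidot x / π x + Sf x) with hφ₅
  have hG₁ : MeasurableSet (G ⁻¹' {1}) := hG (measurableSet_singleton 1)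
  have hA₁ : MeasurableSet A₁ := (hT (measurableSet_singleton 1)).inter hG₁
  have hA₀ : MeasurableSet A₀ := (hT (measurableSet_singleton 0)).inter hG₁
  have hSX : Measurable fun ω => (X ω, S ω) := hX.prodMk hS
  have hm' : Measurable fun x => m x - τ₁ := hm.sub measurable_const
  have i₂ : Integrable (fun ω => (m (X ω) - τ₁) * A₁.indicator (fun ω => S1s (X ω, S ω)) ω) P :=
    (hint _ (Or.inr (Or.inl rfl))).congr (ae_of_all _ fun ω => by
      rcases hTbin ω with ht | ht <;> rcases hGbin ω with hg | hg <;>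
        simp [A₁, Set.indicator, ht, hg])
  have i₃ : Integrable (fun ω => (m (X ω) - τ₁) * A₀.indicator (fun ω => S0s (X ω, S ω)) ω) P :=
    (hint _ (Or.inr (Or.inr (Or.inl rfl)))).congr (ae_of_all _ fun ω => by
      rcases hTbin ω with ht | ht <;> rcases hGbin ω with hg | hg <;>
        simp [A₀, Set.indicator, ht, hg])
  have i₄ : Integrable
      (fun ω => φ₄ (X ω) * (G ⁻¹' {1}).indicator (fun ω => T ω - e (X ω)) ω) P :=
    (hint _ (Or.inr (Or.inr (Or.inr (Or.inl rfl))))).congr (ae_of_all _ fun ω => by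
      rcases hGbin ω with hg | hg
      · simp [Set.indicator, hg]
      · simp only [hg, one_mul, hφ₄, Set.indicator, Set.mem_preimage, Set.mem_singleton_iff,
          if_true]
        ring)
  have h₂ := IsCondMean.integral_comp_mul_indicator_eq_zero hA₁ (IsCondMean.zero_iff.2 hS1s0) hX
    (hS1s.comp hSX).aestronglyMeasurable hm' i₂
  have h₃ := IsCondMean.integral_comp_mul_indicator_eq_zero hA₀ (IsCondMean.zero_iff.2 hS0s0) hX
    (hS0s.comp hSX).aestronglyMeasurable hm' i₃
  have h₄ : ∫ ω, φ₄ (X ω) * (G ⁻¹' {1}).indicator (fun ω => T ω - e (X ω)) ω ∂P = 0 :=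
    (he_ver.sub_comp_of_mem_Icc hX hT he (fun ω => by rcases hTbin ω with h | h <;> simp [h])
      (fun x => Set.Ioo_subset_Icc_self (he_bdd x))).integral_comp_mul_indicator_eq_zero
      hG₁ hX (hT.sub (he.comp hX)).aestronglyMeasurable
      ((hm'.mul hedot).div (he.mul (measurable_const.sub he))) i₄
  have ⟨i₅, hF⟩ := integrable_and_integral_eq_of_forall_eq_add_add_add
    (d := fun ω => φ₅ (X ω) * G ω) ?decomp (hint _ (Or.inl rfl)) i₂ i₃ i₄ h₂ h₃ h₄
  case decomp =>
    intro ω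
    have := (hπ_bdd (X ω)).1.ne'
    have := sub_ne_zero.2 (hπ_bdd (X ω)).2.ne'
    rcases hTbin ω with ht | ht <;> rcases hGbin ω with hg | hg <;>
      simp only [A₁, A₀, hφ₄, hφ₅, ht, hg, Set.indicator, Set.mem_inter_iff,
        Set.mem_ofPred_eq, Set.mem_preimage, Set.mem_singleton_iff, zero_ne_one, one_ne_zero,
        and_self, and_false, false_and, if_true, if_false] <;> field_simp <;> ring
  have h₅ : ∫ ω, φ₅ (X ω) * G ω ∂P
      = ∫ ω, (m (X ω) - τ₁) * (pidot (X ω) + π (X ω) * Sf (X ω)) ∂P := by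
    have hφπ : ∀ ω, φ₅ (X ω) * π (X ω) = (m (X ω) - τ₁) * (pidot (X ω) + π (X ω) * Sf (X ω)) :=
      fun ω => by have := (hπ_bdd (X ω)).1.ne'; simp only [hφ₅]; field_simp
    rw [hπ_ver.integral_comp_mul_eq_of_mem_Icc (g := φ₅) hX hG hπ
      (fun ω => by rcases hGbin ω with h | h <;> simp [h])
      (fun x => Set.Ioo_subset_Icc_self (hπ_bdd x))
      (hm'.mul ((hpidot.div hπ).add hSf)) i₅
      ((hint _ (Or.inr (Or.inr (Or.inr (Or.inr (Or.inr rfl)))))).congr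
        (ae_of_all _ fun ω => (hφπ ω).symm))]
    exact integral_congr_ae (ae_of_all _ hφπ)
  exact hF.trans h₅

/-- **Reduction of the `A`-term in the pathwise derivative calculation.**
`A = E[ G (μ₁(X) - τ₁) · S(T,X,S,Y,G) ] = E[(μ₁(X) - τ₁)(π̇(X) + π(X) S_f(X))]`:
the cross terms with `T·S₁(S|X)`, the propensity-score score and the `(G-π(X))` score vanish
except for the `π` and `f(x)` components. -/
theorem A_term_reduction
    {Ω : Type*} [MeasurableSpace Ω]
    {α β : Type*} [mα : MeasurableSpace α] [mβ : MeasurableSpace β]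
    (P : Measure Ω) [IsProbabilityMeasure P]
    (X : Ω → α) (S : Ω → β) (T G Y Y1 : Ω → ℝ)
    (hX : Measurable X) (hS : Measurable S) (hT : Measurable T) (hG : Measurable G)
    (hY : Measurable Y) (hY1 : Measurable Y1)
    (hTbin : ∀ ω, T ω = 0 ∨ T ω = 1) (hGbin : ∀ ω, G ω = 0 ∨ G ω = 1)
    (hpos : ∀ tv gv : ℝ, tv ∈ ({0, 1} : Set ℝ) → gv ∈ ({0, 1} : Set ℝ) →
      P ({ω | T ω = tv} ∩ G ⁻¹' {gv}) ≠ 0)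
    -- `e(x) = P(T=1|X=x,G=1)` and `π(x) = P(G=1|X=x)`, strictly in `(0,1)`
    (e π p : α → ℝ) (he : Measurable e) (hπ : Measurable π) (hp : Measurable p)
    (he_ver : IsCondMean (P[|G ⁻¹' {1}]) X T e)
    (hπ_ver : IsCondMean P X G π)
    (he_bdd : ∀ x, 0 < e x ∧ e x < 1) (hπ_bdd : ∀ x, 0 < π x ∧ π x < 1)
    (hp_bdd : ∀ x, 0 < p x ∧ p x < 1)
    -- components of the submodel score
    (S1s S0s SS1 SS0 : α × β → ℝ) (SY1 SY0 : α × β × ℝ → ℝ)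
    (edot pidot pdot Sf : α → ℝ)
    (hS1s : Measurable S1s) (hS0s : Measurable S0s) (hSS1 : Measurable SS1)
    (hSS0 : Measurable SS0) (hSY1 : Measurable SY1) (hSY0 : Measurable SY0)
    (hedot : Measurable edot) (hpidot : Measurable pidot) (hpdot : Measurable pdot)
    (hSf : Measurable Sf)
    -- score-space conditions: `∫ S₁(s|x) f₁(s|x) ds = 0` (i.e. `E[S₁(S|X)|X,T=1,G=1]=0`),
    -- likewise for `S₀`, and `∫ S_f(x) f(x) dx = 0`
    (hS1s0 : ∀ B : Set α, MeasurableSet B →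
      ∫ ω in X ⁻¹' B, S1s (X ω, S ω) ∂(P[|{ω | T ω = 1} ∩ G ⁻¹' {1}]) = 0)
    (hS0s0 : ∀ B : Set α, MeasurableSet B →
      ∫ ω in X ⁻¹' B, S0s (X ω, S ω) ∂(P[|{ω | T ω = 0} ∩ G ⁻¹' {1}]) = 0)
    (hSf0 : ∫ ω, Sf (X ω) ∂P = 0)
    -- `μ₁(x) = E[Y(1)|X=x,G=1]` and `τ₁ = E[Y(1)|G=1]`
    (m : α → ℝ) (hm : Measurable m) (hm_ver : IsCondMean (P[|G ⁻¹' {1}]) X Y1 m)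
    (τ₁ : ℝ) (hτ₁ : τ₁ = ∫ ω, Y1 ω ∂(P[|G ⁻¹' {1}]))
    -- integrability of each product term
    (hint : ∀ f : Ω → ℝ,
      (f = fun ω => G ω * (m (X ω) - τ₁) *
          (G ω * T ω * S1s (X ω, S ω)
            + G ω * (1 - T ω) * S0s (X ω, S ω)
            + G ω * (T ω - e (X ω)) * edot (X ω) / (e (X ω) * (1 - e (X ω)))
            + (G ω - π (X ω)) * pidot (X ω) / (π (X ω) * (1 - π (X ω)))
            + (1 - G ω) * T ω * (SY1 (X ω, S ω, Y ω) + SS1 (X ω, S ω))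
            + (1 - G ω) * (1 - T ω) * (SY0 (X ω, S ω, Y ω) + SS0 (X ω, S ω))
            + (1 - G ω) * (T ω - p (X ω)) * pdot (X ω) / (p (X ω) * (1 - p (X ω)))
            + Sf (X ω))) ∨
      (f = fun ω => G ω * (m (X ω) - τ₁) * T ω * S1s (X ω, S ω)) ∨
      (f = fun ω => G ω * (m (X ω) - τ₁) * (1 - T ω) * S0s (X ω, S ω)) ∨
      (f = fun ω => G ω * (m (X ω) - τ₁) * (T ω - e (X ω)) * edot (X ω)
          / (e (X ω) * (1 - e (X ω)))) ∨
      (f = fun ω => G ω * (m (X ω) - τ₁) * (G ω - π (X ω)) * pidot (X ω)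
          / (π (X ω) * (1 - π (X ω)))) ∨
      (f = fun ω => (m (X ω) - τ₁) * (pidot (X ω) + π (X ω) * Sf (X ω))) →
      Integrable f P) :
    ∫ ω, G ω * (m (X ω) - τ₁) *
        (G ω * T ω * S1s (X ω, S ω)
          + G ω * (1 - T ω) * S0s (X ω, S ω)
          + G ω * (T ω - e (X ω)) * edot (X ω) / (e (X ω) * (1 - e (X ω)))
          + (G ω - π (X ω)) * pidot (X ω) / (π (X ω) * (1 - π (X ω)))
          + (1 - G ω) * T ω * (SY1 (X ω, S ω, Y ω) + SS1 (X ω, S ω))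
          + (1 - G ω) * (1 - T ω) * (SY0 (X ω, S ω, Y ω) + SS0 (X ω, S ω))
          + (1 - G ω) * (T ω - p (X ω)) * pdot (X ω) / (p (X ω) * (1 - p (X ω)))
          + Sf (X ω)) ∂P
      = ∫ ω, (m (X ω) - τ₁) * (pidot (X ω) + π (X ω) * Sf (X ω)) ∂P :=
  A_term_reduction_general (mα := mα) (mβ := mβ) P X S T G Y hX hS hT hG hTbin hGbin e π p he hπ
    he_ver hπ_ver he_bdd hπ_bdd S1s S0s SS1 SS0 SY1 SY0 edot pidot pdot Sf hS1s hS0s hedot hpidot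
    hSf hS1s0 hS0s0 m hm τ₁ hint
end
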